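/- Let g be the Lie algebra L*_{9,7} (brackets as in the definition). Define on R^9 with coordinates x_1,...,x_9 the functions I_1 = 16(x_1²+x_2²+x_3²)x_8² + (x_4²+x_5²+x_6²+x_7²)² + 16 x_1 x_8 (x_4 x_5 + x_6 x_7) − 16 x_2 x_8 (x_5 x_6 − x_4 x_7) + 8 x_3 x_8 (x_4² − x_5² + x_6² − x_7²) and I_2 = x_8. Then the vector field \hat{X}_9 = C_{9j}^k x_k ∂/∂x_j satisfies \hat{X}_9(I_1) = −4 I_1 and \hat{X}_9(I_2) = −2 I_2. -/
import Mathlib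


open Finset

noncomputable def Xhat (C : Fin 9 → Fin 9 → Fin 9 → ℝ) (i : Fin 9)
    (F : (Fin 9 → ℝ) → ℝ) : (Fin 9 → ℝ) → ℝ :=
  fun x => ∑ j : Fin 9, (∑ k : Fin 9, C i j k * x k) * fderiv ℝ F x (Pi.single j 1)

noncomputable def Lhalf : Fin 9 → Fin 9 → Fin 9 → ℝ := fun i j k =>
  if (i, j, k) = ((0 : Fin 9), (1 : Fin 9), (2 : Fin 9)) then (1 : ℝ) else
  if (i, j, k) = ((0 : Fin 9), (2 : Fin 9), (1 : Fin 9)) then (-1 : ℝ) else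
  if (i, j, k) = ((1 : Fin 9), (2 : Fin 9), (0 : Fin 9)) then (1 : ℝ) else
  if (i, j, k) = ((0 : Fin 9), (3 : Fin 9), (6 : Fin 9)) then (1/2 : ℝ) else
  if (i, j, k) = ((0 : Fin 9), (4 : Fin 9), (5 : Fin 9)) then (1/2 : ℝ) else
  if (i, j, k) = ((0 : Fin 9), (5 : Fin 9), (4 : Fin 9)) then (-1/2 : ℝ) else
  if (i, j, k) = ((0 : Fin 9), (6 : Fin 9), (3 : Fin 9)) then (-1/2 : ℝ) else
  if (i, j, k) = ((1 : Fin 9), (3 : Fin 9), (4 : Fin 9)) then (1/2 : ℝ) else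
  if (i, j, k) = ((1 : Fin 9), (4 : Fin 9), (3 : Fin 9)) then (-1/2 : ℝ) else
  if (i, j, k) = ((1 : Fin 9), (5 : Fin 9), (6 : Fin 9)) then (1/2 : ℝ) else
  if (i, j, k) = ((1 : Fin 9), (6 : Fin 9), (5 : Fin 9)) then (-1/2 : ℝ) else
  if (i, j, k) = ((2 : Fin 9), (3 : Fin 9), (5 : Fin 9)) then (1/2 : ℝ) else
  if (i, j, k) = ((2 : Fin 9), (4 : Fin 9), (6 : Fin 9)) then (-1/2 : ℝ) else
  if (i, j, k) = ((2 : Fin 9), (5 : Fin 9), (3 : Fin 9)) then (-1/2 : ℝ) else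
  if (i, j, k) = ((2 : Fin 9), (6 : Fin 9), (4 : Fin 9)) then (1/2 : ℝ) else
  if (i, j, k) = ((3 : Fin 9), (5 : Fin 9), (7 : Fin 9)) then (1 : ℝ) else
  if (i, j, k) = ((4 : Fin 9), (6 : Fin 9), (7 : Fin 9)) then (1 : ℝ) else
  if (i, j, k) = ((3 : Fin 9), (8 : Fin 9), (3 : Fin 9)) then (1 : ℝ) else
  if (i, j, k) = ((4 : Fin 9), (8 : Fin 9), (4 : Fin 9)) then (1 : ℝ) else
  if (i, j, k) = ((5 : Fin 9), (8 : Fin 9), (5 : Fin 9)) then (1 : ℝ) else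
  if (i, j, k) = ((6 : Fin 9), (8 : Fin 9), (6 : Fin 9)) then (1 : ℝ) else
  if (i, j, k) = ((7 : Fin 9), (8 : Fin 9), (7 : Fin 9)) then (2 : ℝ) else
  0

noncomputable def C (i j k : Fin 9) : ℝ := Lhalf i j k - Lhalf j i k

noncomputable def I₁ : (Fin 9 → ℝ) → ℝ :=
  fun x : Fin 9 → ℝ => 16*((x 0)^2+(x 1)^2+(x 2)^2)*(x 7)^2 + ((x 3)^2+(x 4)^2+(x 5)^2+(x 6)^2)^2 + 16*(x 0)*(x 7)*((x 3)*(x 4)+(x 5)*(x 6)) - 16*(x 1)*(x 7)*((x 4)*(x 5)-(x 3)*(x 6)) + 8*(x 2)*(x 7)*((x 3)^2-(x 4)^2+(x 5)^2-(x 6)^2)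

noncomputable def I₂ : (Fin 9 → ℝ) → ℝ := fun x => x 7


set_option maxHeartbeats 2000000 in
lemma sum9 (f : Fin 9 → ℝ) : ∑ j : Fin 9, f j = f 0 + f 1 + f 2 + f 3 + f 4 + f 5 + f 6 + f 7 + f 8 := by
  rw [Fin.sum_univ_castSucc, Fin.sum_univ_eight]; rfl

noncomputable def Fpoly : (Fin 9 → ℝ) → ℝ := fun y =>
  16*(y 0*y 0+y 1*y 1+y 2*y 2)*(y 7*y 7)
  + (y 3*y 3+y 4*y 4+y 5*y 5+y 6*y 6)*(y 3*y 3+y 4*y 4+y 5*y 5+y 6*y 6)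
  + 16*y 0*y 7*(y 3*y 4+y 5*y 6)
  - 16*y 1*y 7*(y 4*y 5-y 3*y 6)
  + 8*y 2*y 7*(y 3*y 3-y 4*y 4+y 5*y 5-y 6*y 6)

lemma I1_eq_Fpoly : I₁ = Fpoly := by
  funext y; simp only [I₁, Fpoly]; ring

set_option maxHeartbeats 4000000 in
theorem semiinvariance_L97star :
    ∀ x : Fin 9 → ℝ,
      Xhat C 8 I₁ x = -4 * I₁ x ∧ Xhat C 8 I₂ x = -2 * I₂ x := by
  intro x
  have h : ∀ i : Fin 9, HasFDerivAt (fun y : Fin 9 → ℝ => y i)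
      (ContinuousLinearMap.proj i : (Fin 9 → ℝ) →L[ℝ] ℝ) x := fun i => hasFDerivAt_apply i x
  have A := (((((h 0).mul (h 0)).add ((h 1).mul (h 1))).add ((h 2).mul (h 2))).const_mul (16:ℝ)).mul
    ((h 7).mul (h 7))
  have S := ((((h 3).mul (h 3)).add ((h 4).mul (h 4))).add ((h 5).mul (h 5))).add ((h 6).mul (h 6))
  have B := S.mul S
  have Cc := (((h 0).const_mul (16:ℝ)).mul (h 7)).mul (((h 3).mul (h 4)).add ((h 5).mul (h 6)))
  have D := (((h 1).const_mul (16:ℝ)).mul (h 7)).mul (((h 4).mul (h 5)).sub ((h 3).mul (h 6)))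
  have E := (((h 2).const_mul (8:ℝ)).mul (h 7)).mul
    (((((h 3).mul (h 3)).sub ((h 4).mul (h 4))).add ((h 5).mul (h 5))).sub ((h 6).mul (h 6)))
  have H1 : HasFDerivAt Fpoly _ x := (((A.add B).add Cc).sub D).add E
  have H2 : HasFDerivAt I₂ (ContinuousLinearMap.proj 7 : (Fin 9 → ℝ) →L[ℝ] ℝ) x := h 7
  rw [I1_eq_Fpoly]
  constructor
  · simp only [Xhat, H1.fderiv, sum9]
    simp only [ContinuousLinearMap.add_apply, ContinuousLinearMap.sub_apply,
      ContinuousLinearMap.smul_apply, ContinuousLinearMap.coe_smul', Pi.smul_apply,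
      ContinuousLinearMap.proj_apply, smul_eq_mul]
    simp [C, Lhalf, Pi.single_apply, Fpoly]
    ring
  · simp only [Xhat, H2.fderiv, sum9]
    simp only [ContinuousLinearMap.proj_apply]
    simp [C, Lhalf, Pi.single_apply, I₂]
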